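/- With the same notation, the second partial derivative satisfies (∂₁²δ̆)(u,w) = -(∂₁²δ)(δ̄(u,-w), -w) / (1 + (∂₁δ)(δ̄(u,-w), -w))³. Consequently, if |∂₁²δ(x,r)| ≤ k|r| and 1 + ∂₁δ(x,r) ≥ η > 0 on ℝ × D_ε, then |(∂₁²δ̆)(u,w)| ≤ (k/η³)|w| for all u ∈ ℝ, w ∈ D_ε. -/

import Mathlib

open Set

/-!
Fix `r = -w`. The map `f x = x + δ x r` has derivative `f' = 1 + ∂₁δ(·, r) ≥ η > 0`, so it is
strictly increasing and `g = δ̄(·, r)` is a continuous right inverse of it; the inverse function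
theorem gives `g' = (f' ∘ g)⁻¹`, and differentiating once more, `g'' = -(f'' ∘ g) / (f' ∘ g)³`.
Since `∂₁δ̆(·, w) = g' - 1`, this is the claimed formula, and the bound follows from
`|f''| ≤ k |w|` and `f' ≥ η`.
-/

lemma neg_mem_Ioo_union_Ioo {ε w : ℝ} (hw : w ∈ Ioo (-ε) 0 ∪ Ioo 0 ε) :
    -w ∈ Ioo (-ε) 0 ∪ Ioo 0 ε := by
  rcases hw with ⟨hlo, hhi⟩ | ⟨hlo, hhi⟩
  · exact Or.inr ⟨by linarith, by linarith⟩
  · exact Or.inl ⟨by linarith, by linarith⟩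

lemma StrictMono.continuous_of_rightInverse {α β : Type*} [LinearOrder α] [TopologicalSpace α]
    [OrderTopology α] [LinearOrder β] [TopologicalSpace β] [OrderTopology β] [DenselyOrdered β]
    {f : β → α} {g : α → β} (hf : StrictMono f)
    (hfg : ∀ y, f (g y) = y) : Continuous g := by
  have hmono : Monotone g := fun a b hab => hf.le_iff_le.mp (by rwa [hfg, hfg])
  have hsurj : Function.Surjective g := fun x => ⟨f x, hf.injective (hfg (f x))⟩
  exact hmono.continuous_of_surjective hsurj

section RightInverse

variable {f f' f'' g : ℝ → ℝ}

lemma hasDerivAt_rightInverse_of_deriv_pos (hf : ∀ x, HasDerivAt f (f' x) x)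
    (hpos : ∀ x, 0 < f' x) (hfg : ∀ y, f (g y) = y) (y : ℝ) :
    HasDerivAt g (f' (g y))⁻¹ y := by
  have hg : Continuous g := (strictMono_of_hasDerivAt_pos hf hpos).continuous_of_rightInverse hfg
  exact (hf (g y)).of_local_left_inverse hg.continuousAt (hpos _).ne'
    (Filter.Eventually.of_forall hfg)

/-- `(f' ∘ g)⁻¹` is the derivative of `g`, so this computes `g''`. -/
lemma hasDerivAt_inv_deriv_comp_rightInverse (hf : ∀ x, HasDerivAt f (f' x) x)
    (hf' : ∀ x, HasDerivAt f' (f'' x) x) (hpos : ∀ x, 0 < f' x) (hfg : ∀ y, f (g y) = y)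
    (y : ℝ) :
    HasDerivAt (fun v => (f' (g v))⁻¹) (-f'' (g y) / f' (g y) ^ 3) y := by
  have hcomp : HasDerivAt (fun v => f' (g v)) (f'' (g y) * (f' (g y))⁻¹) y :=
    (hf' (g y)).comp y (hasDerivAt_rightInverse_of_deriv_pos hf hpos hfg y)
  refine (hcomp.fun_inv (hpos _).ne').congr_deriv ?_
  field_simp [(hpos (g y)).ne']

end RightInverse

lemma abs_div_pow_le_of_le {a b K η : ℝ} (n : ℕ) (hη : 0 < η) (ha : η ≤ a) (hb : |b| ≤ K) :
    |b / a ^ n| ≤ K / η ^ n := by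
  have ha_pos : 0 < a := hη.trans_le ha
  rw [abs_div, abs_of_pos (pow_pos ha_pos n)]
  exact div_le_div₀ ((abs_nonneg b).trans hb) hb (pow_pos hη n) (pow_le_pow_left₀ hη.le ha n)

theorem breve_delta_second_u_derivative_general
    (ε η k : ℝ) (hη : 0 < η)
    (Dε : Set ℝ) (hD : Dε = Ioo (-ε) 0 ∪ Ioo 0 ε)
    (δ d1δ d11δ δbar : ℝ → ℝ → ℝ)
    (hd1 : ∀ x : ℝ, ∀ w ∈ Dε, HasDerivAt (fun y => δ y w) (d1δ x w) x)
    (hd11 : ∀ x : ℝ, ∀ w ∈ Dε, HasDerivAt (fun y => d1δ y w) (d11δ x w) x)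
    (hd11bd : ∀ x : ℝ, ∀ w ∈ Dε, |d11δ x w| ≤ k * |w|)
    (hd1lb : ∀ x : ℝ, ∀ w ∈ Dε, η ≤ 1 + d1δ x w)
    (hinv : ∀ w ∈ Dε, ∀ u : ℝ, δbar u w + δ (δbar u w) w = u) :
    ∀ u : ℝ, ∀ w ∈ Dε,
      -- ∂₁δ̆(·,w) is the function v ↦ -(∂₁δ)(δ̄(v,-w),-w)/(1+(∂₁δ)(δ̄(v,-w),-w));
      -- its derivative in u is the displayed quotient
      HasDerivAt (fun v => -(d1δ (δbar v (-w)) (-w)) / (1 + d1δ (δbar v (-w)) (-w)))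
        (-(d11δ (δbar u (-w)) (-w)) / (1 + d1δ (δbar u (-w)) (-w)) ^ 3) u ∧
      |(-(d11δ (δbar u (-w)) (-w)) / (1 + d1δ (δbar u (-w)) (-w)) ^ 3)| ≤ (k / η ^ 3) * |w| := by
  intro u w hw
  subst hD
  have hr := neg_mem_Ioo_union_Ioo hw
  have hpos : ∀ x, 0 < 1 + d1δ x (-w) := fun x => hη.trans_le (hd1lb x _ hr)
  have hsecond := hasDerivAt_inv_deriv_comp_rightInverse (f := fun x => x + δ x (-w))
    (fun x => (hasDerivAt_id x).add (hd1 x _ hr)) (fun x => (hd11 x _ hr).const_add 1) hpos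
    (fun v => by simpa [add_comm] using hinv _ hr v) u
  refine ⟨?_, ?_⟩
  · have hquot : (fun v => -(d1δ (δbar v (-w)) (-w)) / (1 + d1δ (δbar v (-w)) (-w))) =
        fun v => (1 + d1δ (δbar v (-w)) (-w))⁻¹ - 1 := by
      funext v
      field_simp [(hpos (δbar v (-w))).ne']
      ring
    simpa only [hquot, sub_zero] using hsecond.sub_const 1
  · rw [div_mul_eq_mul_div]
    refine abs_div_pow_le_of_le 3 hη (hd1lb _ _ hr) ?_
    simpa only [abs_neg] using hd11bd _ _ hr

/-- The second partial derivative of `δ̆(u,w) = δ̄(u,-w) - u` in `u` satisfies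
`∂₁²δ̆(u,w) = -(∂₁²δ)(δ̄(u,-w),-w)/(1 + (∂₁δ)(δ̄(u,-w),-w))³`, and if `|∂₁²δ(x,r)| ≤ k|r|`
and `1 + ∂₁δ ≥ η > 0` on `ℝ × D_ε` then `|∂₁²δ̆(u,w)| ≤ (k/η³)|w|`. -/
theorem breve_delta_second_u_derivative
    (ε η k : ℝ) (hε : 0 < ε) (hη : 0 < η)
    (Dε : Set ℝ) (hD : Dε = Ioo (-ε) 0 ∪ Ioo 0 ε)
    (δ d1δ d11δ δbar : ℝ → ℝ → ℝ)
    (hd1 : ∀ x : ℝ, ∀ w ∈ Dε, HasDerivAt (fun y => δ y w) (d1δ x w) x)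
    (hd11 : ∀ x : ℝ, ∀ w ∈ Dε, HasDerivAt (fun y => d1δ y w) (d11δ x w) x)
    (hd11bd : ∀ x : ℝ, ∀ w ∈ Dε, |d11δ x w| ≤ k * |w|)
    (hd1lb : ∀ x : ℝ, ∀ w ∈ Dε, η ≤ 1 + d1δ x w)
    (hinv : ∀ w ∈ Dε, ∀ u : ℝ, δbar u w + δ (δbar u w) w = u) :
    ∀ u : ℝ, ∀ w ∈ Dε,
      -- ∂₁δ̆(·,w) is the function v ↦ -(∂₁δ)(δ̄(v,-w),-w)/(1+(∂₁δ)(δ̄(v,-w),-w));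
      -- its derivative in u is the displayed quotient
      HasDerivAt (fun v => -(d1δ (δbar v (-w)) (-w)) / (1 + d1δ (δbar v (-w)) (-w)))
        (-(d11δ (δbar u (-w)) (-w)) / (1 + d1δ (δbar u (-w)) (-w)) ^ 3) u ∧
      |(-(d11δ (δbar u (-w)) (-w)) / (1 + d1δ (δbar u (-w)) (-w)) ^ 3)| ≤ (k / η ^ 3) * |w| :=
  breve_delta_second_u_derivative_general ε η k hη Dε hD δ d1δ d11δ δbar hd1 hd11 hd11bd hd1lb hinv
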